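/- arXiv:1008.5286 — 3 statements merged into one kernel-verified Lean document; each statement's English description precedes it below -/
import Mathlib

section
/- For n×n complex matrices X, Y, real q ≥ 2, λ ∈ (0, 1/2], and a constant C_q ≥ 0 such that (λ‖X+Y‖_q^q + (1-λ)‖X - (λ/(1-λ))Y‖_q^q)^{2/q} ≤ ‖X‖_q^2 + C_q‖Y‖_q^2 holds for all X, Y, the analogous inequality holds at exponent 2q with constant 2C_q + 1, i.e. (λ‖X+Y‖_{2q}^{2q} + (1-λ)‖X - (λ/(1-λ))Y‖_{2q}^{2q})^{1/q} ≤ ‖X‖_{2q}^2 + (2C_q+1)‖Y‖_{2q}^2. -/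
open Matrix

/-- Schatten p-norm of a complex n×n matrix. -/
noncomputable def schattenNorm {n : ℕ} (p : ℝ) (A : Matrix (Fin n) (Fin n) ℂ) : ℝ :=
  (∑ i, (Matrix.isHermitian_conjTranspose_mul_self A).eigenvalues i ^ (p / 2)) ^ (1 / p)

/-!
Put `μ = λ / (1 - λ)` and apply the hypothesis at exponent `q` to the Hermitian matrices
`A = XᴴX + μ YᴴY` and `B = XᴴY + YᴴX + (1 - μ) YᴴY`. Since `A + B = (X + Y)ᴴ(X + Y)`,
`A - μB = (X - μY)ᴴ(X - μY)` and `‖ZᴴZ‖_q = ‖Z‖_{2q}²`, its left side is the left side at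
exponent `2q`. The triangle inequality gives `‖A‖_q ≤ ‖X‖_{2q}² + μ‖Y‖_{2q}²`, and
`‖B‖_q ≤ 2‖X‖_{2q}‖Y‖_{2q} + (1 - μ)‖Y‖_{2q}²` because `±(XᴴY + YᴴX) ≤ t XᴴX + t⁻¹ YᴴY` for
every `t > 0`; what remains is an inequality between real numbers.

The Schatten-norm facts all come from Schur's observation that the diagonal of a Hermitian
matrix in any orthonormal basis is a doubly stochastic average of its eigenvalues, so that
`∑ f (diagonal entries) ≤ ∑ f (eigenvalues)` for convex `f`.
-/

open scoped ComplexOrder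

lemma convexOn_abs_rpow {p : ℝ} (hp : 1 ≤ p) : ConvexOn ℝ Set.univ fun x : ℝ => |x| ^ p := by
  have himage : (fun x : ℝ => |x|) '' Set.univ = Set.Ici 0 := by
    ext y
    exact ⟨by rintro ⟨x, -, rfl⟩; exact abs_nonneg x, fun hy => ⟨y, trivial, abs_of_nonneg hy⟩⟩
  refine ConvexOn.comp (g := fun x : ℝ => x ^ p) ?_ (convexOn_univ_norm (E := ℝ)) ?_
  · rw [himage]
    exact convexOn_rpow hp
  · rw [himage]
    exact Real.monotoneOn_rpow_Ici_of_exponent_nonneg (by linarith)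

lemma rpow_one_div_le_of_rpow_two_div_le {w r q : ℝ} (hw : 0 ≤ w) (hr : 0 ≤ r)
    (h : w ^ (2 / q) ≤ r ^ 2) : w ^ (1 / q) ≤ r := by
  refine (pow_le_pow_iff_left₀ (Real.rpow_nonneg hw _) hr two_ne_zero).mp ?_
  rwa [← Real.rpow_natCast, ← Real.rpow_mul hw, Nat.cast_ofNat, one_div_mul_eq_div]

lemma le_two_mul_mul_of_forall_pos {a x y : ℝ} (hx : 0 ≤ x) (hy : 0 ≤ y)
    (h : ∀ t > 0, a ≤ t * x ^ 2 + t⁻¹ * y ^ 2) : a ≤ 2 * x * y := by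
  refine le_of_forall_pos_le_add fun ε hε => ?_
  set δ := ε / (x + y + 1)
  have hδ : 0 < δ := by positivity
  -- the optimal `t = y / x`, shifted so that `x = 0` and `y = 0` need no separate treatment
  have h₁ : (y + δ) / (x + δ) * x ^ 2 ≤ (y + δ) * x := by
    rw [div_mul_eq_mul_div, div_le_iff₀ (by positivity)]
    nlinarith [mul_nonneg (mul_nonneg hx hδ.le) (add_nonneg hy hδ.le)]
  have h₂ : ((y + δ) / (x + δ))⁻¹ * y ^ 2 ≤ (x + δ) * y := by
    rw [inv_div, div_mul_eq_mul_div, div_le_iff₀ (by positivity)]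
    nlinarith [mul_nonneg (mul_nonneg hy hδ.le) (add_nonneg hx hδ.le)]
  have h₃ : δ * (x + y) ≤ ε := by
    rw [div_mul_eq_mul_div, div_le_iff₀ (by positivity)]
    nlinarith
  linarith [h ((y + δ) / (x + δ)) (by positivity)]

lemma sq_add_mul_sq_add_mul_sq_le {x y C μ : ℝ} (hC : 0 ≤ C) (hμ0 : 0 ≤ μ) (hμ1 : μ ≤ 1) :
    (x ^ 2 + μ * y ^ 2) ^ 2 + C * (2 * x * y + (1 - μ) * y ^ 2) ^ 2
      ≤ (x ^ 2 + (2 * C + 1) * y ^ 2) ^ 2 := by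
  have hcoef : 0 ≤ (1 - μ ^ 2) + C * (3 - μ ^ 2) + 2 * C ^ 2 * (1 + μ) + 2 * μ * C := by
    have hμ2 : μ ^ 2 ≤ 1 := by nlinarith
    have : 0 ≤ C * (3 - μ ^ 2) := mul_nonneg hC (by linarith)
    have : 0 ≤ 2 * C ^ 2 * (1 + μ) + 2 * μ * C := by positivity
    linarith
  have key : (x ^ 2 + (2 * C + 1) * y ^ 2) ^ 2
      - ((x ^ 2 + μ * y ^ 2) ^ 2 + C * (2 * x * y + (1 - μ) * y ^ 2) ^ 2)
      = 2 * (1 - μ) * y ^ 2 * (x - C * y) ^ 2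
        + ((1 - μ ^ 2) + C * (3 - μ ^ 2) + 2 * C ^ 2 * (1 + μ) + 2 * μ * C) * y ^ 4 := by
    ring
  have : 0 ≤ 1 - μ := by linarith
  rw [← sub_nonneg, key]
  positivity

namespace Matrix

lemma isHermitian_conjTranspose_mul_add_conjTranspose_mul {ι : Type*} [Fintype ι]
    (X Y : Matrix ι ι ℂ) : (Xᴴ * Y + Yᴴ * X).IsHermitian := by
  simp [IsHermitian, conjTranspose_add, conjTranspose_mul, add_comm]

variable {ι : Type*} [Fintype ι] [DecidableEq ι]

lemma sum_norm_sq_col_eq_one_of_mem_unitaryGroup {W : Matrix ι ι ℂ}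
    (hW : W ∈ unitaryGroup ι ℂ) (i : ι) : ∑ j, ‖W j i‖ ^ 2 = 1 := by
  have h := congr_fun₂ (mem_unitaryGroup_iff'.mp hW) i i
  simp only [mul_apply, star_apply, one_apply_eq] at h
  exact_mod_cast (by simpa [mul_comm, Complex.mul_conj'] using h : ∑ j, (‖W j i‖ : ℂ) ^ 2 = 1)

lemma sum_norm_sq_row_eq_one_of_mem_unitaryGroup {W : Matrix ι ι ℂ}
    (hW : W ∈ unitaryGroup ι ℂ) (j : ι) : ∑ i, ‖W j i‖ ^ 2 = 1 := by
  have h := congr_fun₂ (mem_unitaryGroup_iff.mp hW) j j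
  simp only [mul_apply, star_apply, one_apply_eq] at h
  exact_mod_cast (by simpa [Complex.mul_conj'] using h : ∑ i, (‖W j i‖ : ℂ) ^ 2 = 1)

lemma re_conjTranspose_mul_diagonal_mul_apply_self (W : Matrix ι ι ℂ) (d : ι → ℝ) (i : ι) :
    ((Wᴴ * diagonal (fun j => (d j : ℂ)) * W) i i).re = ∑ j, ‖W j i‖ ^ 2 * d j := by
  simp only [mul_apply, conjTranspose_apply, diagonal_apply, mul_ite, mul_zero,
    Finset.sum_ite_eq', Finset.mem_univ, if_true, Complex.re_sum]
  refine Finset.sum_congr rfl fun j _ => ?_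
  rw [mul_right_comm, mul_comm (star _), Complex.star_def, Complex.mul_conj']
  norm_cast

theorem IsHermitian.sum_convexOn_diag_le {A U : Matrix ι ι ℂ} (hA : A.IsHermitian)
    (hU : U ∈ unitaryGroup ι ℂ) {s : Set ℝ} {f : ℝ → ℝ} (hf : ConvexOn ℝ s f)
    (hs : ∀ i, hA.eigenvalues i ∈ s) :
    ∑ i, f ((Uᴴ * A * U) i i).re ≤ ∑ i, f (hA.eigenvalues i) := by
  set V : Matrix ι ι ℂ := ↑hA.eigenvectorUnitary
  set W := Vᴴ * U
  have hW : W ∈ unitaryGroup ι ℂ := mul_mem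
    (by simpa [V, star_eq_conjTranspose] using Unitary.star_mem hA.eigenvectorUnitary.2) hU
  have hconj : Uᴴ * A * U = Wᴴ * diagonal (fun j => (hA.eigenvalues j : ℂ)) * W := by
    conv_lhs => rw [hA.spectral_theorem]
    simp [W, V, Matrix.mul_assoc, conjTranspose_mul, star_eq_conjTranspose, Function.comp_def]
  calc ∑ i, f ((Uᴴ * A * U) i i).re = ∑ i, f (∑ j, ‖W j i‖ ^ 2 • hA.eigenvalues j) := by
        simp_rw [hconj, re_conjTranspose_mul_diagonal_mul_apply_self, smul_eq_mul]
    _ ≤ ∑ i, ∑ j, ‖W j i‖ ^ 2 • f (hA.eigenvalues j) := Finset.sum_le_sum fun i _ =>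
        hf.map_sum_le (fun j _ => sq_nonneg _) (sum_norm_sq_col_eq_one_of_mem_unitaryGroup hW i)
          (fun j _ => hs j)
    _ = ∑ j, f (hA.eigenvalues j) := by
        rw [Finset.sum_comm]
        simp_rw [smul_eq_mul, ← Finset.sum_mul, sum_norm_sq_row_eq_one_of_mem_unitaryGroup hW,
          one_mul]

lemma IsHermitian.re_conjTranspose_eigenvectorUnitary_mul_mul_apply_self {A : Matrix ι ι ℂ}
    (hA : A.IsHermitian) (i : ι) :
    (((hA.eigenvectorUnitary : Matrix ι ι ℂ)ᴴ * A * hA.eigenvectorUnitary) i i).re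
      = hA.eigenvalues i := by
  have h := congr_fun₂ hA.conjStarAlgAut_star_eigenvectorUnitary i i
  simp only [Unitary.conjStarAlgAut_star_apply, star_eq_conjTranspose] at h
  simp [h]

lemma IsHermitian.sum_eigenvalues_eq_of_eq_cfc {A B : Matrix ι ι ℂ} (hA : A.IsHermitian)
    (hB : B.IsHermitian) {f : ℝ → ℝ} (hBA : B = cfc f A) (g : ℝ → ℝ) :
    ∑ i, g (hB.eigenvalues i) = ∑ i, g (f (hA.eigenvalues i)) := by
  subst hBA
  have hroots := hB.roots_charpoly_eq_eigenvalues
  rw [hA.charpoly_cfc_eq f, Polynomial.roots_prod _ _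
    (by simp [Finset.prod_ne_zero_iff, Polynomial.X_sub_C_ne_zero])] at hroots
  simp only [Polynomial.roots_X_sub_C, Multiset.bind_singleton] at hroots
  have := congrArg (fun m : Multiset ℂ => (m.map (g ∘ Complex.re)).sum) hroots
  simpa only [Multiset.map_map, Function.comp_def, RCLike.ofReal_eq_complex_ofReal,
    Complex.ofReal_re, ← Finset.sum_eq_multiset_sum] using this.symm

end Matrix

section Schatten

variable {n : ℕ}

lemma schattenNorm_nonneg (p : ℝ) (A : Matrix (Fin n) (Fin n) ℂ) : 0 ≤ schattenNorm p A :=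
  Real.rpow_nonneg (Finset.sum_nonneg fun i _ =>
    Real.rpow_nonneg ((posSemidef_conjTranspose_mul_self A).eigenvalues_nonneg i) _) _

lemma schattenNorm_of_isHermitian (p : ℝ) {M : Matrix (Fin n) (Fin n) ℂ} (hM : M.IsHermitian) :
    schattenNorm p M = (∑ i, |hM.eigenvalues i| ^ p) ^ (1 / p) := by
  have hsq : Mᴴ * M = cfc (fun t : ℝ => t ^ 2) M := by
    rw [cfc_pow_id M 2 hM.isSelfAdjoint, hM.eq, sq]
  unfold schattenNorm
  rw [hM.sum_eigenvalues_eq_of_eq_cfc _ hsq (· ^ (p / 2))]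
  congr 1
  refine Finset.sum_congr rfl fun i _ => ?_
  rw [← sq_abs, ← Real.rpow_natCast, ← Real.rpow_mul (abs_nonneg _)]
  norm_num [mul_div_cancel₀]

lemma schattenNorm_smul_of_isHermitian {p : ℝ} (hp : p ≠ 0) (c : ℝ)
    {M : Matrix (Fin n) (Fin n) ℂ} (hM : M.IsHermitian) :
    schattenNorm p (c • M) = |c| * schattenNorm p M := by
  have hcM : (c • M).IsHermitian := hM.smul (IsSelfAdjoint.all c)
  rw [schattenNorm_of_isHermitian p hcM, schattenNorm_of_isHermitian p hM,
    hM.sum_eigenvalues_eq_of_eq_cfc hcM (cfc_const_mul_id c M hM.isSelfAdjoint).symm (|·| ^ p)]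
  simp_rw [abs_mul, Real.mul_rpow (abs_nonneg c) (abs_nonneg _), ← Finset.mul_sum]
  rw [Real.mul_rpow (by positivity) (Finset.sum_nonneg fun i _ => by positivity),
    ← Real.rpow_mul (abs_nonneg c), mul_one_div_cancel hp, Real.rpow_one]

lemma schattenNorm_conjTranspose_mul_self (q : ℝ) (Z : Matrix (Fin n) (Fin n) ℂ) :
    schattenNorm q (Zᴴ * Z) = schattenNorm (2 * q) Z ^ 2 := by
  have hZ := posSemidef_conjTranspose_mul_self Z
  rw [schattenNorm_of_isHermitian q hZ.isHermitian, schattenNorm,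
    mul_div_cancel_left₀ q two_ne_zero, ← Real.rpow_natCast,
    ← Real.rpow_mul (Finset.sum_nonneg fun i _ => Real.rpow_nonneg (hZ.eigenvalues_nonneg i) _)]
  simp_rw [abs_of_nonneg (hZ.eigenvalues_nonneg _)]
  congr 1
  ring

lemma schattenNorm_conjTranspose_mul_self_rpow (q : ℝ) (Z : Matrix (Fin n) (Fin n) ℂ) :
    schattenNorm q (Zᴴ * Z) ^ q = schattenNorm (2 * q) Z ^ (2 * q) := by
  rw [schattenNorm_conjTranspose_mul_self, ← Real.rpow_natCast,
    ← Real.rpow_mul (schattenNorm_nonneg _ _)]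
  norm_num

lemma schattenNorm_add_le_of_isHermitian {p : ℝ} (hp : 1 ≤ p) {A B : Matrix (Fin n) (Fin n) ℂ}
    (hA : A.IsHermitian) (hB : B.IsHermitian) :
    schattenNorm p (A + B) ≤ schattenNorm p A + schattenNorm p B := by
  have hAB := hA.add hB
  set U : Matrix (Fin n) (Fin n) ℂ := ↑hAB.eigenvectorUnitary
  have hU : U ∈ unitaryGroup (Fin n) ℂ := hAB.eigenvectorUnitary.2
  set a : Fin n → ℝ := fun i => ((Uᴴ * A * U) i i).re
  set b : Fin n → ℝ := fun i => ((Uᴴ * B * U) i i).re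
  have hab : ∀ i, hAB.eigenvalues i = a i + b i := fun i => by
    rw [← hAB.re_conjTranspose_eigenvectorUnitary_mul_mul_apply_self, Matrix.mul_add,
      Matrix.add_mul]
    rfl
  rw [schattenNorm_of_isHermitian p hAB, schattenNorm_of_isHermitian p hA,
    schattenNorm_of_isHermitian p hB]
  calc (∑ i, |hAB.eigenvalues i| ^ p) ^ (1 / p) ≤ (∑ i, (|a i| + |b i|) ^ p) ^ (1 / p) := by
        gcongr with i
        rw [hab]
        exact abs_add_le _ _
    _ ≤ (∑ i, |a i| ^ p) ^ (1 / p) + (∑ i, |b i| ^ p) ^ (1 / p) :=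
        Real.Lp_add_le_of_nonneg _ hp (fun i _ => abs_nonneg _) (fun i _ => abs_nonneg _)
    _ ≤ (∑ i, |hA.eigenvalues i| ^ p) ^ (1 / p) + (∑ i, |hB.eigenvalues i| ^ p) ^ (1 / p) := by
        gcongr ?_ ^ _ + ?_ ^ _
        · exact hA.sum_convexOn_diag_le hU (convexOn_abs_rpow hp) fun _ => trivial
        · exact hB.sum_convexOn_diag_le hU (convexOn_abs_rpow hp) fun _ => trivial

lemma schattenNorm_le_of_posSemidef_sub_of_posSemidef_add {p : ℝ} (hp : 1 ≤ p)
    {B R : Matrix (Fin n) (Fin n) ℂ} (hB : B.IsHermitian) (hsub : (R - B).PosSemidef)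
    (hadd : (R + B).PosSemidef) : schattenNorm p B ≤ schattenNorm p R := by
  have hR : R.IsHermitian := by simpa using hsub.isHermitian.add hB
  set U : Matrix (Fin n) (Fin n) ℂ := ↑hB.eigenvectorUnitary
  have hU : U ∈ unitaryGroup (Fin n) ℂ := hB.eigenvectorUnitary.2
  set r : Fin n → ℝ := fun i => ((Uᴴ * R * U) i i).re
  -- in the eigenbasis of `B`, the diagonal of `R ∓ B` is `r ∓ (eigenvalues of B) ≥ 0`
  have hle : ∀ i, |hB.eigenvalues i| ≤ r i := fun i => by
    have h₁ := (hsub.conjTranspose_mul_mul_same U).diag_nonneg (i := i)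
    have h₂ := (hadd.conjTranspose_mul_mul_same U).diag_nonneg (i := i)
    rw [Matrix.mul_sub, Matrix.sub_mul, Matrix.sub_apply] at h₁
    rw [Matrix.mul_add, Matrix.add_mul, Matrix.add_apply] at h₂
    have h₁' := (Complex.nonneg_iff.mp h₁).1
    have h₂' := (Complex.nonneg_iff.mp h₂).1
    rw [Complex.sub_re, hB.re_conjTranspose_eigenvectorUnitary_mul_mul_apply_self] at h₁'
    rw [Complex.add_re, hB.re_conjTranspose_eigenvectorUnitary_mul_mul_apply_self] at h₂'
    exact abs_le.mpr ⟨by linarith, by linarith⟩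
  rw [schattenNorm_of_isHermitian p hB, schattenNorm_of_isHermitian p hR]
  gcongr ?_ ^ _
  calc ∑ i, |hB.eigenvalues i| ^ p ≤ ∑ i, |r i| ^ p := Finset.sum_le_sum fun i _ =>
        Real.rpow_le_rpow (abs_nonneg _) ((hle i).trans (le_abs_self _)) (by linarith)
    _ ≤ ∑ i, |hR.eigenvalues i| ^ p :=
        hR.sum_convexOn_diag_le hU (convexOn_abs_rpow hp) fun _ => trivial

lemma schattenNorm_conjTranspose_mul_add_le {q : ℝ} (hq : 1 ≤ q)
    (X Y : Matrix (Fin n) (Fin n) ℂ) :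
    schattenNorm q (Xᴴ * Y + Yᴴ * X) ≤ 2 * schattenNorm (2 * q) X * schattenNorm (2 * q) Y := by
  refine le_two_mul_mul_of_forall_pos (schattenNorm_nonneg _ _) (schattenNorm_nonneg _ _)
    fun t ht => ?_
  have hsub : t • (Xᴴ * X) + t⁻¹ • (Yᴴ * Y) - (Xᴴ * Y + Yᴴ * X)
      = t⁻¹ • ((t • X - Y)ᴴ * (t • X - Y)) := by
    simp only [conjTranspose_sub, conjTranspose_smul, star_trivial, Matrix.sub_mul,
      Matrix.mul_sub, smul_mul_assoc, mul_smul_comm, smul_sub, smul_smul]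
    field_simp
    module
  have hadd : t • (Xᴴ * X) + t⁻¹ • (Yᴴ * Y) + (Xᴴ * Y + Yᴴ * X)
      = t⁻¹ • ((t • X + Y)ᴴ * (t • X + Y)) := by
    simp only [conjTranspose_add, conjTranspose_smul, star_trivial, Matrix.add_mul,
      Matrix.mul_add, smul_mul_assoc, mul_smul_comm, smul_add, smul_smul]
    field_simp
    module
  have hXX := isHermitian_conjTranspose_mul_self X
  have hYY := isHermitian_conjTranspose_mul_self Y
  calc schattenNorm q (Xᴴ * Y + Yᴴ * X)
      ≤ schattenNorm q (t • (Xᴴ * X) + t⁻¹ • (Yᴴ * Y)) := by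
        refine schattenNorm_le_of_posSemidef_sub_of_posSemidef_add hq
          (isHermitian_conjTranspose_mul_add_conjTranspose_mul X Y) ?_ ?_
        · rw [hsub]
          exact (posSemidef_conjTranspose_mul_self _).smul (inv_nonneg.mpr ht.le)
        · rw [hadd]
          exact (posSemidef_conjTranspose_mul_self _).smul (inv_nonneg.mpr ht.le)
    _ ≤ schattenNorm q (t • (Xᴴ * X)) + schattenNorm q (t⁻¹ • (Yᴴ * Y)) :=
        schattenNorm_add_le_of_isHermitian hq (hXX.smul (IsSelfAdjoint.all _))
          (hYY.smul (IsSelfAdjoint.all _))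
    _ = t * schattenNorm (2 * q) X ^ 2 + t⁻¹ * schattenNorm (2 * q) Y ^ 2 := by
        rw [schattenNorm_smul_of_isHermitian (by linarith) _ hXX,
          schattenNorm_smul_of_isHermitian (by linarith) _ hYY,
          schattenNorm_conjTranspose_mul_self, schattenNorm_conjTranspose_mul_self,
          abs_of_pos ht, abs_of_pos (inv_pos.mpr ht)]

lemma schattenNorm_conjTranspose_mul_self_add_smul_le {q c : ℝ} (hq : 1 ≤ q) (hc : 0 ≤ c)
    (X Y : Matrix (Fin n) (Fin n) ℂ) :
    schattenNorm q (Xᴴ * X + c • (Yᴴ * Y))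
      ≤ schattenNorm (2 * q) X ^ 2 + c * schattenNorm (2 * q) Y ^ 2 := by
  have hYY := isHermitian_conjTranspose_mul_self Y
  refine (schattenNorm_add_le_of_isHermitian hq (isHermitian_conjTranspose_mul_self X)
    (hYY.smul (IsSelfAdjoint.all c))).trans_eq ?_
  rw [schattenNorm_smul_of_isHermitian (by linarith) _ hYY, abs_of_nonneg hc,
    schattenNorm_conjTranspose_mul_self, schattenNorm_conjTranspose_mul_self]

lemma schattenNorm_conjTranspose_mul_add_add_smul_le {q c : ℝ} (hq : 1 ≤ q) (hc : 0 ≤ c)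
    (X Y : Matrix (Fin n) (Fin n) ℂ) :
    schattenNorm q (Xᴴ * Y + Yᴴ * X + c • (Yᴴ * Y))
      ≤ 2 * schattenNorm (2 * q) X * schattenNorm (2 * q) Y
        + c * schattenNorm (2 * q) Y ^ 2 := by
  have hYY := isHermitian_conjTranspose_mul_self Y
  refine (schattenNorm_add_le_of_isHermitian hq
    (isHermitian_conjTranspose_mul_add_conjTranspose_mul X Y)
    (hYY.smul (IsSelfAdjoint.all c))).trans ?_
  rw [schattenNorm_smul_of_isHermitian (by linarith) _ hYY, abs_of_nonneg hc,
    schattenNorm_conjTranspose_mul_self]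
  gcongr
  exact schattenNorm_conjTranspose_mul_add_le hq X Y

end Schatten

/-- doubling the exponent in the asymmetric convexity inequality. -/
theorem stmt2 {n : ℕ} (q lam Cq : ℝ) (hq : 2 ≤ q) (hl0 : 0 < lam) (hl1 : lam ≤ 1 / 2)
    (hC : 0 ≤ Cq)
    (hyp : ∀ X Y : Matrix (Fin n) (Fin n) ℂ,
      (lam * schattenNorm q (X + Y) ^ q
        + (1 - lam) * schattenNorm q (X - ((lam / (1 - lam) : ℝ) : ℂ) • Y) ^ q) ^ (2 / q)
        ≤ schattenNorm q X ^ 2 + Cq * schattenNorm q Y ^ 2) :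
    ∀ X Y : Matrix (Fin n) (Fin n) ℂ,
      (lam * schattenNorm (2 * q) (X + Y) ^ (2 * q)
        + (1 - lam) * schattenNorm (2 * q) (X - ((lam / (1 - lam) : ℝ) : ℂ) • Y) ^ (2 * q)) ^ (1 / q)
        ≤ schattenNorm (2 * q) X ^ 2 + (2 * Cq + 1) * schattenNorm (2 * q) Y ^ 2 := by
  intro X Y
  set μ := lam / (1 - lam)
  have hμ0 : 0 ≤ μ := div_nonneg hl0.le (by linarith)
  have hμ1 : μ ≤ 1 := (div_le_one (by linarith)).mpr (by linarith)
  have hq1 : 1 ≤ q := by linarith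
  set A := Xᴴ * X + μ • (Yᴴ * Y)
  set B := Xᴴ * Y + Yᴴ * X + (1 - μ) • (Yᴴ * Y)
  have hAB : A + B = (X + Y)ᴴ * (X + Y) := by
    simp only [A, B, conjTranspose_add, Matrix.add_mul, Matrix.mul_add]
    module
  have hAμB : A - (μ : ℂ) • B = (X - (μ : ℂ) • Y)ᴴ * (X - (μ : ℂ) • Y) := by
    simp only [A, B, conjTranspose_sub, conjTranspose_smul, Complex.star_def, Complex.conj_ofReal,
      Matrix.sub_mul, Matrix.mul_sub, smul_mul_assoc, mul_smul_comm, smul_add, smul_sub]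
    module
  have H := hyp A B
  rw [hAB, hAμB, schattenNorm_conjTranspose_mul_self_rpow,
    schattenNorm_conjTranspose_mul_self_rpow] at H
  refine rpow_one_div_le_of_rpow_two_div_le (add_nonneg
    (mul_nonneg hl0.le (Real.rpow_nonneg (schattenNorm_nonneg _ _) _))
    (mul_nonneg (by linarith) (Real.rpow_nonneg (schattenNorm_nonneg _ _) _)))
    (by positivity) (H.trans ?_)
  calc schattenNorm q A ^ 2 + Cq * schattenNorm q B ^ 2
      ≤ (schattenNorm (2 * q) X ^ 2 + μ * schattenNorm (2 * q) Y ^ 2) ^ 2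
        + Cq * (2 * schattenNorm (2 * q) X * schattenNorm (2 * q) Y
          + (1 - μ) * schattenNorm (2 * q) Y ^ 2) ^ 2 := by
        gcongr ?_ ^ 2 + Cq * ?_ ^ 2
        · exact schattenNorm_nonneg q A
        · exact schattenNorm_conjTranspose_mul_self_add_smul_le hq1 hμ0 X Y
        · exact schattenNorm_nonneg q B
        · exact schattenNorm_conjTranspose_mul_add_add_smul_le hq1 (by linarith) X Y
    _ ≤ _ := sq_add_mul_sq_add_mul_sq_le hC hμ0 hμ1
end

section
/- Let μ ≥ 1, λ = 1/(1+μ⁴), t ≥ 0. Then the 4×4 Choi matrix C with diagonal entries λ(1+e^{-2t}μ⁴), λ(1-e^{-2t}), (1-λ)(1-e^{-2t}), (1-λ)(1+e^{-2t}μ^{-4}) and off-diagonal entries C_{14} = C_{41} = e^{-t} (all other entries zero) is positive semidefinite. -/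
/-!
The matrix splits into the diagonal entries at positions 2, 3, which are nonnegative since
`0 ≤ λ ≤ 1` and `e^{-2t} ≤ 1`, and the 2 × 2 block on positions 1, 4, whose determinant is
`λ (1 - λ) (1 - e^{-2t})² ≥ 0`.
-/

open Matrix Real

theorem quadratic_form_nonneg_of_sq_le {a b d : ℝ} (ha : 0 ≤ a) (hd : 0 ≤ d)
    (hb : b ^ 2 ≤ a * d) (x y : ℝ) : 0 ≤ a * x ^ 2 + 2 * b * x * y + d * y ^ 2 := by
  rcases ha.eq_or_lt with rfl | ha
  · obtain rfl : b = 0 := by nlinarith [sq_nonneg b]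
    nlinarith [sq_nonneg y]
  · have : 0 ≤ a * (a * x ^ 2 + 2 * b * x * y + d * y ^ 2) := by
      nlinarith [sq_nonneg (a * x + b * y), mul_nonneg (sub_nonneg.2 hb) (sq_nonneg y)]
    exact nonneg_of_mul_nonneg_right (by linarith) ha

theorem Matrix.posSemidef_of_corners {a b d p q : ℝ} (ha : 0 ≤ a) (hd : 0 ≤ d) (hp : 0 ≤ p)
    (hq : 0 ≤ q) (hb : b ^ 2 ≤ a * d) :
    (!![a, 0, 0, b; 0, p, 0, 0; 0, 0, q, 0; b, 0, 0, d] : Matrix (Fin 4) (Fin 4) ℝ).PosSemidef := by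
  refine posSemidef_iff_dotProduct_mulVec.2 ⟨?_, fun x => ?_⟩
  · ext i j
    fin_cases i <;> fin_cases j <;> simp
  · have hcorner := quadratic_form_nonneg_of_sq_le ha hd hb (x 0) (x 3)
    simp [dotProduct, mulVec, Fin.sum_univ_four]
    nlinarith [mul_nonneg hp (sq_nonneg (x 1)), mul_nonneg hq (sq_nonneg (x 2))]

theorem mul_one_add_mul_sub_eq_mul_sq {m s lam : ℝ} (hm : m ≠ 0) (hm1 : 1 + m ≠ 0)
    (hlam : lam = 1 / (1 + m)) :
    lam * (1 + s * m) * ((1 - lam) * (1 + s * m⁻¹)) - s = lam * (1 - lam) * (1 - s) ^ 2 := by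
  subst hlam
  field_simp
  ring

/-- positivity of the Choi matrix of the one-site Ornstein-Uhlenbeck map. -/
theorem stmt6 (μ t : ℝ) (hμ : 1 ≤ μ) (ht : 0 ≤ t) (lam : ℝ) (hlam : lam = 1 / (1 + μ ^ 4)) :
    let C : Matrix (Fin 4) (Fin 4) ℝ :=
      !![lam * (1 + Real.exp (-2 * t) * μ ^ 4), 0, 0, Real.exp (-t);
         0, lam * (1 - Real.exp (-2 * t)), 0, 0;
         0, 0, (1 - lam) * (1 - Real.exp (-2 * t)), 0;
         Real.exp (-t), 0, 0, (1 - lam) * (1 + Real.exp (-2 * t) * (μ ^ 4)⁻¹)]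
    C.PosSemidef := by
  intro C
  have hm : 0 < μ ^ 4 := by positivity
  have hlam0 : 0 ≤ lam := by rw [hlam]; positivity
  have hlam1 : 0 ≤ 1 - lam := by
    rw [hlam, sub_nonneg, div_le_one (by positivity)]; linarith
  have hs : Real.exp (-2 * t) = Real.exp (-t) ^ 2 := by rw [← Real.exp_nat_mul]; ring_nf
  have hs1 : 0 ≤ 1 - Real.exp (-2 * t) := sub_nonneg.2 (Real.exp_le_one_iff.2 (by linarith))
  have hdet := mul_one_add_mul_sub_eq_mul_sq (s := Real.exp (-2 * t)) hm.ne' (by positivity) hlam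
  refine posSemidef_of_corners (by positivity) (by positivity) (mul_nonneg hlam0 hs1)
    (mul_nonneg hlam1 hs1) ?_
  rw [← hs]
  linarith [mul_nonneg (mul_nonneg hlam0 hlam1) (sq_nonneg (1 - Real.exp (-2 * t)))]
end

section
/- Let T be the linear map on 2×2 complex matrices determined by T(e_{12}) = e^{-t}e_{12}, T(e_{21}) = e^{-t}e_{21}, T(I) = I and T(μ²e_{11} - μ^{-2}e_{22}) = e^{-2t}(μ²e_{11} - μ^{-2}e_{22}), where μ ≥ 1 and t ≥ 0. Then T(e_{11}) = λ(1+e^{-2t}μ⁴)e_{11} + λ(1-e^{-2t})e_{22} and T(e_{22}) = (1-λ)(1-e^{-2t})e_{11} + (1-λ)(1+e^{-2t}μ^{-4})e_{22}, with λ = 1/(1+μ⁴), and T is completely positive. -/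
/-!
Since `e₁₁` and `e₂₂` are combinations of `I` and `μ² e₁₁ - μ⁻² e₂₂`, linearity gives `T` on the
diagonal matrix units. With `r = e^{-t}` and `λ (1 + μ⁴) = 1`, the resulting values show
`T X = λ (K₁ X K₁ᴴ + K₂ X K₂ᴴ) + λ (1 - r²) (e₂₁ X e₁₂ + μ⁴ e₁₂ X e₂₁)` with
`K₁ = diag(1, r)` and `K₂ = μ² diag(r, 1)`. All weights are nonnegative because `r ≤ 1`, so the
Choi matrix is a nonnegative combination of rank-one positive matrices.
-/

open Matrix ComplexOrder

def choiMatrix {R m n : Type*} [Semiring R] [DecidableEq n] (T : Matrix n n R →ₗ[R] Matrix m m R) :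
    Matrix (n × m) (n × m) R :=
  of fun p q => T (single p.1 q.1 1) p.2 q.2

theorem mul_single_one_mul_conjTranspose_apply {R m n : Type*} [Fintype m] [Fintype n]
    [DecidableEq n] [Semiring R] [StarRing R] (K : Matrix m n R) (i j : n) (a b : m) :
    (K * single i j (1 : R) * Kᴴ) a b = K a i * star (K b j) := by
  simp [mul_apply, single, ite_and, Finset.sum_ite_eq]

theorem posSemidef_choiMatrix_of_kraus {R m n ι : Type*} [Fintype m] [Fintype n] [Fintype ι]
    [DecidableEq n] [CommRing R] [PartialOrder R] [StarRing R] [StarOrderedRing R]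
    (T : Matrix n n R →ₗ[R] Matrix m m R) (w : ι → R) (hw : 0 ≤ w) (K : ι → Matrix m n R)
    (hT : ∀ i j, T (single i j 1) = ∑ k, w k • (K k * single i j (1 : R) * (K k)ᴴ)) :
    (choiMatrix T).PosSemidef := by
  have hchoi : choiMatrix T =
      ∑ k, w k • vecMulVec (fun p => K k p.2 p.1) (star fun p => K k p.2 p.1) := by
    ext p q
    simp [choiMatrix, hT, Matrix.sum_apply, mul_single_one_mul_conjTranspose_apply, vecMulVec_apply]
  rw [hchoi]
  exact posSemidef_sum _ fun k _ => (posSemidef_vecMulVec_self_star _).smul (hw k)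

section TwoByTwo

variable {K : Type*} [Field K] (T : Matrix (Fin 2) (Fin 2) K →ₗ[K] Matrix (Fin 2) (Fin 2) K)
  {α β s : K} (hαβ : α + β ≠ 0) (hI : T 1 = 1)
  (hD : T (α • single 0 0 1 - β • single 1 1 1) = s • (α • single 0 0 1 - β • single 1 1 1))
include hαβ hI hD

theorem map_single_zero_zero_of_map_one_of_eigen :
    T (single 0 0 1) = ((β + s * α) / (α + β)) • single 0 0 1
      + (β * (1 - s) / (α + β)) • single 1 1 1 := by
  rw [← sum_single_one, Fin.sum_univ_two, map_add] at hI
  rw [map_sub, map_smul, map_smul] at hD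
  apply smul_right_injective _ hαβ
  simp only [smul_add, smul_smul, mul_div_cancel₀ _ hαβ]
  linear_combination (norm := module) β • hI + hD

theorem map_single_one_one_of_map_one_of_eigen :
    T (single 1 1 1) = (α * (1 - s) / (α + β)) • single 0 0 1
      + ((α + s * β) / (α + β)) • single 1 1 1 := by
  rw [← sum_single_one, Fin.sum_univ_two, map_add] at hI
  rw [map_sub, map_smul, map_smul] at hD
  apply smul_right_injective _ hαβ
  simp only [smul_add, smul_smul, mul_div_cancel₀ _ hαβ]
  linear_combination (norm := module) α • hI - hD

end TwoByTwo

section OrnsteinUhlenbeck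

variable {μ t lam : ℝ} {T : Matrix (Fin 2) (Fin 2) ℂ →ₗ[ℂ] Matrix (Fin 2) (Fin 2) ℂ}

theorem ornsteinUhlenbeck_map_single_diag (hμ : μ ≠ 0) (hlam : lam = 1 / (1 + μ ^ 4))
    (hI : T 1 = 1)
    (hdiag : T (((μ : ℂ) ^ 2) • single 0 0 1 - ((μ : ℂ) ^ 2)⁻¹ • single 1 1 1) =
      (Real.exp (-2 * t) : ℂ) • (((μ : ℂ) ^ 2) • single 0 0 1 - ((μ : ℂ) ^ 2)⁻¹ • single 1 1 1)) :
    T (single 0 0 1) =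
        ((lam * (1 + Real.exp (-2 * t) * μ ^ 4) : ℝ) : ℂ) • single 0 0 1
          + ((lam * (1 - Real.exp (-2 * t)) : ℝ) : ℂ) • single 1 1 1 ∧
      T (single 1 1 1) =
        (((1 - lam) * (1 - Real.exp (-2 * t)) : ℝ) : ℂ) • single 0 0 1
          + (((1 - lam) * (1 + Real.exp (-2 * t) * (μ ^ 4)⁻¹) : ℝ) : ℂ) • single 1 1 1 := by
  have hμ' : (μ : ℂ) ≠ 0 := mod_cast hμ
  have hP : 1 + (μ : ℂ) ^ 4 ≠ 0 := mod_cast (by positivity : 1 + μ ^ 4 ≠ 0)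
  have hsum : (μ : ℂ) ^ 2 + ((μ : ℂ) ^ 2)⁻¹ = (1 + (μ : ℂ) ^ 4) / μ ^ 2 := by
    field_simp; ring
  have hαβ : (μ : ℂ) ^ 2 + ((μ : ℂ) ^ 2)⁻¹ ≠ 0 := hsum ▸ div_ne_zero hP (pow_ne_zero _ hμ')
  rw [map_single_zero_zero_of_map_one_of_eigen T hαβ hI hdiag,
    map_single_one_one_of_map_one_of_eigen T hαβ hI hdiag, hsum, hlam]
  constructor <;> congr 2 <;> push_cast <;> field_simp <;> ring

theorem posSemidef_choiMatrix_ornsteinUhlenbeck (hμ : μ ≠ 0) (ht : 0 ≤ t)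
    (hlam : lam = 1 / (1 + μ ^ 4))
    (h00 : T (single 0 0 1) =
        ((lam * (1 + Real.exp (-2 * t) * μ ^ 4) : ℝ) : ℂ) • single 0 0 1
          + ((lam * (1 - Real.exp (-2 * t)) : ℝ) : ℂ) • single 1 1 1)
    (h11 : T (single 1 1 1) =
        (((1 - lam) * (1 - Real.exp (-2 * t)) : ℝ) : ℂ) • single 0 0 1
          + (((1 - lam) * (1 + Real.exp (-2 * t) * (μ ^ 4)⁻¹) : ℝ) : ℂ) • single 1 1 1)
    (h01 : T (single 0 1 1) = (Real.exp (-t) : ℂ) • single 0 1 1)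
    (h10 : T (single 1 0 1) = (Real.exp (-t) : ℂ) • single 1 0 1) :
    (choiMatrix T).PosSemidef := by
  set r := Real.exp (-t)
  have hE : Real.exp (-2 * t) = r ^ 2 := by rw [← Real.exp_nat_mul]; ring_nf
  have hr : r ^ 2 ≤ 1 := hE ▸ Real.exp_le_one_iff.mpr (by linarith)
  have hP : 1 + (μ : ℂ) ^ 4 ≠ 0 := mod_cast (by positivity : 1 + μ ^ 4 ≠ 0)
  rw [hE] at h00 h11
  subst hlam
  let w : Fin 4 → ℝ := ![1, 1, 1 - r ^ 2, 1 - r ^ 2]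
  let K : Fin 4 → Matrix (Fin 2) (Fin 2) ℂ :=
    ![diagonal ![1, (r : ℂ)], (μ : ℂ) ^ 2 • diagonal ![(r : ℂ), 1], single 1 0 1,
      (μ : ℂ) ^ 2 • single 0 1 1]
  have hw : ∀ k, 0 ≤ 1 / (1 + μ ^ 4) * w k := fun k => by
    fin_cases k <;> simp [w] <;> positivity
  refine posSemidef_choiMatrix_of_kraus T (fun k => ((1 / (1 + μ ^ 4) * w k : ℝ) : ℂ))
    (fun k => Complex.zero_le_real.mpr (hw k)) K fun i j => ?_
  fin_cases i <;> fin_cases j <;> ext a b <;> fin_cases a <;> fin_cases b <;>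
    simp [h00, h11, h01, h10, Fin.sum_univ_four, w, K] <;> field_simp <;> ring

end OrnsteinUhlenbeck

/-- the one-site Ornstein-Uhlenbeck map on `M₂(ℂ)`: values on matrix units
and complete positivity (positivity of the Choi matrix). -/
theorem stmt8 (μ t : ℝ) (hμ : 1 ≤ μ) (ht : 0 ≤ t) (lam : ℝ) (hlam : lam = 1 / (1 + μ ^ 4))
    (T : Matrix (Fin 2) (Fin 2) ℂ →ₗ[ℂ] Matrix (Fin 2) (Fin 2) ℂ)
    (h12 : T (Matrix.single 0 1 1) =
      (Real.exp (-t) : ℂ) • Matrix.single 0 1 1)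
    (h21 : T (Matrix.single 1 0 1) =
      (Real.exp (-t) : ℂ) • Matrix.single 1 0 1)
    (hI : T 1 = 1)
    (hdiag : T (((μ : ℂ) ^ 2) • Matrix.single 0 0 1
        - ((μ : ℂ) ^ 2)⁻¹ • Matrix.single 1 1 1) =
      (Real.exp (-2 * t) : ℂ) • (((μ : ℂ) ^ 2) • Matrix.single 0 0 1
        - ((μ : ℂ) ^ 2)⁻¹ • Matrix.single 1 1 1)) :
    T (Matrix.single 0 0 1) =
        ((lam * (1 + Real.exp (-2 * t) * μ ^ 4) : ℝ) : ℂ) • Matrix.single 0 0 1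
          + ((lam * (1 - Real.exp (-2 * t)) : ℝ) : ℂ) • Matrix.single 1 1 1 ∧
      T (Matrix.single 1 1 1) =
        (((1 - lam) * (1 - Real.exp (-2 * t)) : ℝ) : ℂ) • Matrix.single 0 0 1
          + (((1 - lam) * (1 + Real.exp (-2 * t) * (μ ^ 4)⁻¹) : ℝ) : ℂ) •
              Matrix.single 1 1 1 ∧
      (Matrix.of fun (p q : Fin 2 × Fin 2) =>
        T (Matrix.single p.1 q.1 1) p.2 q.2).PosSemidef := by
  have hμ0 : μ ≠ 0 := (zero_lt_one.trans_le hμ).ne'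
  obtain ⟨h00, h11⟩ := ornsteinUhlenbeck_map_single_diag hμ0 hlam hI hdiag
  exact ⟨h00, h11, posSemidef_choiMatrix_ornsteinUhlenbeck hμ0 ht hlam h00 h11 h12 h21⟩
end
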